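/- arXiv:2011.03645 — 3 statements merged into one kernel-verified Lean document; each statement's English description precedes it below -/
import Mathlib

section
/- Linear access, centralized optimum: for n ≥ 2 and λ > 1, the welfare function W(c) = 1 − (1 − λc)ⁿ − nc on c ∈ [0, 1/λ] is maximized at c_opt = λ^{−1} − λ^{−n/(n−1)}, with optimal value W(c_opt) = 1 − λ^{−n/(n−1)} − n(λ^{−1} − λ^{−n/(n−1)}), and this optimal value is strictly positive. -/
/-!
Substituting `t = 1 - λc ∈ [0, 1]` turns the welfare into `1 - tⁿ - n(1 - t)/λ`, a concave function
of `t` whose critical point `r = λ^(-1/(n-1))` solves `n rⁿ⁻¹ = n/λ`. The tangent-line (Bernoulli)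
inequality `rⁿ + n rⁿ⁻¹ (t - r) ≤ tⁿ` is exactly the statement that `r` is the maximiser, and its
strict form at `t = 1` compares the optimum with the zero welfare at `c = 0`.
-/

open Real

lemma pow_add_mul_lt_add_pow {a b : ℝ} (ha : 0 < a) (hab : 0 ≤ a + b) (hb : b ≠ 0) {n : ℕ}
    (hn : 2 ≤ n) : a ^ n + n * a ^ (n - 1) * b < (a + b) ^ n := by
  have hs : -1 ≤ b / a := by rw [le_div_iff₀ ha]; linarith
  have bernoulli := one_add_mul_self_lt_rpow_one_add hs (div_ne_zero hb ha.ne')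
    (p := n) (by exact_mod_cast hn)
  rw [rpow_natCast] at bernoulli
  obtain ⟨m, rfl⟩ : ∃ m, n = m + 1 := ⟨n - 1, by omega⟩
  calc a ^ (m + 1) + ↑(m + 1) * a ^ (m + 1 - 1) * b
      = a ^ (m + 1) * (1 + ↑(m + 1) * (b / a)) := by
        rw [Nat.add_sub_cancel, pow_succ]; field_simp
    _ < a ^ (m + 1) * (1 + b / a) ^ (m + 1) := mul_lt_mul_of_pos_left bernoulli (pow_pos ha _)
    _ = (a + b) ^ (m + 1) := by rw [← mul_pow]; congr 1; field_simp

noncomputable def welfare (n : ℕ) (lam c : ℝ) : ℝ := 1 - (1 - lam * c) ^ n - n * c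

section

variable {n : ℕ} {lam r : ℝ}

lemma welfare_inv_mul_one_sub (hlam : lam ≠ 0) :
    welfare n lam (lam⁻¹ * (1 - r)) = 1 - r ^ n - n * (lam⁻¹ * (1 - r)) := by
  rw [welfare, ← mul_assoc, mul_inv_cancel₀ hlam, one_mul, sub_sub_cancel]

lemma welfare_le_of_pow_pred_eq (hlam : 0 < lam) (hr : 0 < r) (hrn : r ^ (n - 1) = lam⁻¹)
    {c : ℝ} (hc : c ∈ Set.Icc 0 lam⁻¹) : welfare n lam c ≤ welfare n lam (lam⁻¹ * (1 - r)) := by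
  set t := 1 - lam * c with ht
  have hc_eq : c = lam⁻¹ * (1 - t) := by rw [ht]; field_simp; ring
  have ht0 : 0 ≤ t := by
    have := mul_le_mul_of_nonneg_left hc.2 hlam.le
    rw [mul_inv_cancel₀ hlam.ne'] at this
    linarith
  have tangent := pow_add_mul_le_add_pow hr.le (by linarith : 0 ≤ 2 * r + (t - r)) n
  rw [add_sub_cancel, hrn] at tangent
  rw [welfare_inv_mul_one_sub hlam.ne', welfare, ← ht, hc_eq]
  linear_combination tangent

lemma welfare_pos_of_pow_pred_eq (hn : 2 ≤ n) (hlam : 0 < lam) (hr0 : 0 < r) (hr1 : r < 1)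
    (hrn : r ^ (n - 1) = lam⁻¹) : 0 < welfare n lam (lam⁻¹ * (1 - r)) := by
  have tangent := pow_add_mul_lt_add_pow hr0 (by linarith : 0 ≤ r + (1 - r)) (by linarith) hn
  rw [add_sub_cancel, one_pow, hrn] at tangent
  rw [welfare_inv_mul_one_sub hlam.ne']
  linear_combination tangent

end

lemma rpow_neg_one_div_sub_one_pow {n : ℕ} (hn : 2 ≤ n) {lam : ℝ} (hlam : 0 < lam) :
    (lam ^ (-1 / ((n : ℝ) - 1))) ^ (n - 1) = lam⁻¹ := by
  have hcast : ((n - 1 : ℕ) : ℝ) = (n : ℝ) - 1 := by rw [Nat.cast_sub (by omega), Nat.cast_one]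
  have hne : (n : ℝ) - 1 ≠ 0 := by rw [← hcast]; exact_mod_cast (by omega : n - 1 ≠ 0)
  rw [← rpow_natCast, ← rpow_mul hlam.le, hcast, div_mul_cancel₀ _ hne, rpow_neg_one]

lemma rpow_neg_div_sub_one {n : ℕ} (hn : 2 ≤ n) {lam : ℝ} (hlam : 0 < lam) :
    lam ^ (-(n : ℝ) / ((n : ℝ) - 1)) = lam⁻¹ * lam ^ (-1 / ((n : ℝ) - 1)) := by
  have hne : (n : ℝ) - 1 ≠ 0 := by
    have : (2 : ℝ) ≤ n := by exact_mod_cast hn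
    linarith
  rw [← rpow_neg_one, ← rpow_add hlam]
  congr 1
  field_simp
  ring

/-- linear access, centralized optimum: for `n ≥ 2` and `λ > 1`, the welfare
`W(c) = 1 − (1 − λc)ⁿ − nc` on `c ∈ [0, 1/λ]` is maximized at
`c_opt = λ⁻¹ − λ^(−n/(n−1))`, with optimal value
`W(c_opt) = 1 − λ^(−n/(n−1)) − n (λ⁻¹ − λ^(−n/(n−1))) > 0`. -/
theorem stmt_4 (n : ℕ) (hn : 2 ≤ n) (lam : ℝ) (hlam : 1 < lam)
    (W : ℝ → ℝ) (hW : ∀ c, W c = 1 - (1 - lam * c) ^ n - n * c)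
    (copt : ℝ) (hcopt : copt = lam⁻¹ - lam ^ (-(n : ℝ) / ((n : ℝ) - 1))) :
    copt ∈ Set.Icc 0 lam⁻¹ ∧
    (∀ c ∈ Set.Icc 0 lam⁻¹, W c ≤ W copt) ∧
    W copt = 1 - lam ^ (-(n : ℝ) / ((n : ℝ) - 1))
      - n * (lam⁻¹ - lam ^ (-(n : ℝ) / ((n : ℝ) - 1))) ∧
    0 < W copt := by
  have hlam0 : 0 < lam := by linarith
  have hn' : (2 : ℝ) ≤ n := by exact_mod_cast hn
  obtain rfl : W = welfare n lam := funext hW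
  set r := lam ^ (-1 / ((n : ℝ) - 1))
  have hr0 : 0 < r := rpow_pos_of_pos hlam0 _
  have hr1 : r < 1 :=
    rpow_lt_one_of_one_lt_of_neg hlam (div_neg_of_neg_of_pos (by norm_num) (by linarith))
  have hrn : r ^ (n - 1) = lam⁻¹ := rpow_neg_one_div_sub_one_pow hn hlam0
  have hrn' : r ^ n = lam⁻¹ * r := by rw [← hrn, ← pow_succ, Nat.sub_add_cancel (by omega)]
  rw [← hcopt]
  obtain rfl : copt = lam⁻¹ * (1 - r) := by rw [hcopt, rpow_neg_div_sub_one hn hlam0]; ring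
  have hinv : 0 ≤ lam⁻¹ := inv_nonneg.2 hlam0.le
  refine ⟨⟨mul_nonneg hinv (by linarith), mul_le_of_le_one_right hinv (by linarith)⟩,
    fun c hc => welfare_le_of_pow_pred_eq hlam0 hr0 hrn hc, ?_,
    welfare_pos_of_pow_pred_eq hn hlam0 hr0 hr1 hrn⟩
  rw [welfare_inv_mul_one_sub hlam0.ne', rpow_neg_div_sub_one hn hlam0, hrn']
end

section
/- Linear access, strategic equilibrium has zero welfare: for n ≥ 2 and λ > 1, if c_self ∈ (0, 1/λ] satisfies the symmetric equilibrium condition Σ_{k=0}^{n−1} (1/(k+1))·C(n−1,k)·(λ c_self)^k (1−λ c_self)^{n−1−k} = 1/λ, then 1 − (1 − λ c_self)ⁿ = n·c_self, and hence the social welfare W(c_self) = 1 − (1 − λ c_self)ⁿ − n c_self equals 0. -/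
/-! Since `n / (k + 1) · C(n-1, k) = C(n, k+1)`, multiplying the equilibrium sum by `n p` gives
`∑ C(n, k+1) p^(k+1) (1-p)^(n-1-k)`, the binomial expansion of `1 - (1 - p)^n`. With `p = λ c` and
the sum equal to `1/λ`, this is `n c`. -/

open Finset

theorem one_sub_one_sub_pow_succ_eq_sum {R : Type*} [CommRing R] (m : ℕ) (p : R) :
    1 - (1 - p) ^ (m + 1) =
      ∑ k ∈ range (m + 1), ((m + 1).choose (k + 1) : R) * p ^ (k + 1) * (1 - p) ^ (m - k) := by
  have h := add_pow p (1 - p) (m + 1)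
  rw [add_sub_cancel, one_pow, sum_range_succ'] at h
  simp only [Nat.add_sub_add_right, pow_zero, Nat.sub_zero, Nat.choose_zero_right, Nat.cast_one,
    one_mul, mul_one] at h
  have hreorder :
      ∑ k ∈ range (m + 1), ((m + 1).choose (k + 1) : R) * p ^ (k + 1) * (1 - p) ^ (m - k) =
        ∑ k ∈ range (m + 1), p ^ (k + 1) * (1 - p) ^ (m - k) * ((m + 1).choose (k + 1) : R) :=
    sum_congr rfl fun k _ => by ring
  rw [hreorder]
  linear_combination h

theorem natCast_mul_mul_sum_choose_div_succ {K : Type*} [Field K] [CharZero K] (n : ℕ) (p : K) :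
    n * p * ∑ k ∈ range n, 1 / ((k : K) + 1) * (n - 1).choose k * p ^ k * (1 - p) ^ (n - 1 - k) =
      1 - (1 - p) ^ n := by
  rcases n with _ | m
  · simp
  rw [one_sub_one_sub_pow_succ_eq_sum, mul_sum]
  refine sum_congr rfl fun k _ => ?_
  have hchoose : ((m + 1 : ℕ) : K) * m.choose k = (m + 1).choose (k + 1) * ((k : K) + 1) := by
    exact_mod_cast Nat.add_one_mul_choose_eq m k
  have hk : (k : K) + 1 ≠ 0 := Nat.cast_add_one_ne_zero k
  simp only [Nat.add_sub_cancel]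
  field_simp
  linear_combination p ^ (k + 1) * (1 - p) ^ (m - k) * hchoose

theorem stmt_5_general (n : ℕ) (lam : ℝ) (hlam : 1 < lam)
    (cself : ℝ)
    (heq : ∑ k ∈ Finset.range n, (1 / ((k : ℝ) + 1)) * (Nat.choose (n - 1) k : ℝ)
        * (lam * cself) ^ k * (1 - lam * cself) ^ (n - 1 - k) = 1 / lam) :
    1 - (1 - lam * cself) ^ n = n * cself ∧
    1 - (1 - lam * cself) ^ n - n * cself = 0 := by
  have hwin : 1 - (1 - lam * cself) ^ n = n * cself := by
    rw [← natCast_mul_mul_sum_choose_div_succ, heq]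
    field_simp [(zero_lt_one.trans hlam).ne']
  exact ⟨hwin, sub_eq_zero.mpr hwin⟩

/-- linear access, strategic equilibrium has zero welfare: for `n ≥ 2`, `λ > 1`,
if `c_self ∈ (0, 1/λ]` satisfies the symmetric equilibrium condition
`Σ_{k=0}^{n−1} (1/(k+1))·C(n−1,k)·(λ c)^k (1−λ c)^{n−1−k} = 1/λ`, then
`1 − (1 − λ c)ⁿ = n c`, and hence the social welfare `W(c) = 1 − (1 − λ c)ⁿ − n c` is `0`. -/
theorem stmt_5 (n : ℕ) (hn : 2 ≤ n) (lam : ℝ) (hlam : 1 < lam)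
    (cself : ℝ) (hc : cself ∈ Set.Ioc 0 lam⁻¹)
    (heq : ∑ k ∈ Finset.range n, (1 / ((k : ℝ) + 1)) * (Nat.choose (n - 1) k : ℝ)
        * (lam * cself) ^ k * (1 - lam * cself) ^ (n - 1 - k) = 1 / lam) :
    1 - (1 - lam * cself) ^ n = n * cself ∧
    1 - (1 - lam * cself) ^ n - n * cself = 0 :=
  stmt_5_general n lam hlam cself heq
end

section
/- Exponential access, strategic welfare vanishes: suppose for each n ≥ 2 the equilibrium effort c_n > 0 satisfies n(1 − e^{−λ c_n}) = λ e^{−λ c_n}(1 − e^{−nλ c_n}). Then e^{−λ c_n} = 1 − Θ(1/n) (i.e., n(1 − e^{−λ c_n}) stays in a fixed positive bounded interval), and the social welfare W(c_n) = 1 − e^{−nλ c_n} − n c_n is O(1/n) as n → ∞. -/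
private lemma key (lam : ℝ) (hlam : 1 < lam) (n : ℕ) (hn : 2 ≤ n) (c : ℝ) (hc : 0 < c)
    (heq : (n:ℝ) * (1 - Real.exp (-(lam * c)))
      = lam * Real.exp (-(lam * c)) * (1 - Real.exp (-(n * lam * c)))) :
    ((lam - 1)/lam ≤ (n:ℝ) * (1 - Real.exp (-(lam * c)))
      ∧ (n:ℝ) * (1 - Real.exp (-(lam * c))) ≤ lam)
    ∧ |1 - Real.exp (-(n * lam * c)) - n * c| ≤ lam^2 / n := by
  have hlam0 : (0:ℝ) < lam := by linarith
  have hn0 : (0:ℝ) < n := by positivity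
  set x := Real.exp (-(lam * c)) with hxdef
  have hx0 : 0 < x := Real.exp_pos _
  have hx1 : x < 1 := by
    rw [hxdef]
    have : -(lam * c) < 0 := by nlinarith
    calc Real.exp (-(lam*c)) < Real.exp 0 := Real.exp_lt_exp.mpr this
    _ = 1 := Real.exp_zero
  have hxn : Real.exp (-((n:ℝ) * lam * c)) = x ^ n := by
    rw [hxdef, ← Real.exp_nat_mul]; congr 1; ring
  rw [hxn] at heq ⊢
  set t := (n:ℝ) * (1 - x) with htdef
  have ht_pos : 0 < t := by
    have : 0 < 1 - x := by linarith
    positivity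
  clear_value t
  have hxn0 : 0 < x ^ n := pow_pos hx0 n
  have hxn1 : x ^ n < 1 := pow_lt_one₀ hx0.le hx1 (by omega)
  -- t ≤ lam
  have htle : t ≤ lam := by
    nlinarith [heq, mul_pos hlam0 hx0, mul_pos (mul_pos hlam0 hx0) hxn0, hx1]
  -- Bernoulli: 1 - t ≤ x^n
  have hber1 : 1 - t ≤ x ^ n := by
    have h := one_add_mul_le_pow (show (-2:ℝ) ≤ x - 1 by linarith) n
    rw [show (1:ℝ) + (x - 1) = x by ring] at h
    rw [htdef]; linarith
  -- 1 ≤ lam * x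
  have hlx : 1 ≤ lam * x := by
    have h2 : lam * x * (1 - x^n) ≤ lam * x * t := by
      apply mul_le_mul_of_nonneg_left (by linarith) (by positivity)
    nlinarith [heq, ht_pos]
  -- Bernoulli on 1/x : x^n * (x + t) ≤ x
  have hgeo : x ^ n * (x + t) ≤ x := by
    have hm2 : (-2:ℝ) ≤ 1/x - 1 := by
      have hpx : (0:ℝ) < 1/x := by positivity
      linarith
    have h := one_add_mul_le_pow hm2 n
    rw [show (1:ℝ) + (1/x - 1) = 1/x by ring, div_pow, one_pow] at h
    have e2 : x ^ n * (1 / x ^ n) = 1 := by field_simp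
    have e1 : x * (1/x) = 1 := by field_simp
    have step : x ^ n * (1 + (n:ℝ) * (1/x - 1)) ≤ x ^ n * (1 / x ^ n) :=
      mul_le_mul_of_nonneg_left h (pow_pos hx0 n).le
    rw [e2] at step
    have step2 : x * (x ^ n * (1 + (n:ℝ) * (1/x - 1))) ≤ x * 1 :=
      mul_le_mul_of_nonneg_left step hx0.le
    have expand : x * (x ^ n * (1 + (n:ℝ) * (1/x - 1)))
        = x ^ n * x + (n:ℝ) * x ^ n - (n:ℝ) * (x ^ n * x) := by
      field_simp; ring
    rw [expand] at step2
    rw [htdef]; linarith [step2]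
  -- t ≥ (lam-1)/lam
  have h3 : t * (x + t) = lam * x * (1 - x ^ n) * (x + t) := by rw [heq]
  have h1 : lam * x * t ≤ t * (x + t) := by
    have h2 : lam * x * (x ^ n * (x + t)) ≤ lam * x * x :=
      mul_le_mul_of_nonneg_left hgeo (by positivity)
    nlinarith [h2, h3]
  have h4 : lam * x ≤ x + t := le_of_mul_le_mul_right (by nlinarith [h1]) ht_pos
  have htge : (lam - 1)/lam ≤ t := by
    rw [div_le_iff₀ hlam0]
    nlinarith [h4, hlx]
  refine ⟨⟨htge, htle⟩, ?_⟩
  -- welfare bound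
  have hlc : Real.log x = -(lam * c) := by rw [hxdef, Real.log_exp]
  have hlog_le : Real.log x ≤ x - 1 := Real.log_le_sub_one_of_pos hx0
  have hlog_ge : 1 - 1/x ≤ Real.log x := by
    have h := Real.log_le_sub_one_of_pos (show (0:ℝ) < 1/x by positivity)
    rw [one_div, Real.log_inv] at h
    rw [one_div]; linarith
  set W := 1 - x ^ n - (n:ℝ) * c with hWdef
  clear_value W
  have hxlam : (0:ℝ) < x * lam := by positivity
  clear_value x
  have hid : x * (lam * W) = t + x * ((n:ℝ) * Real.log x) := by
    have h5 : x * (lam * (1 - x ^ n)) = t := by rw [heq]; ring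
    rw [hWdef, hlc]
    linear_combination h5
  have hxlog_ge : x - 1 ≤ x * Real.log x := by
    have := mul_le_mul_of_nonneg_left hlog_ge hx0.le
    have e1 : x * (1 - 1/x) = x - 1 := by field_simp
    linarith [e1 ▸ this]
  have hW1 : 0 ≤ x * (lam * W) := by
    rw [hid]
    have : -t ≤ x * ((n:ℝ) * Real.log x) := by
      have : (n:ℝ) * (x - 1) ≤ (n:ℝ) * (x * Real.log x) :=
        mul_le_mul_of_nonneg_left hxlog_ge hn0.le
      rw [htdef]; nlinarith [this]
    linarith
  have hW2 : (n:ℝ) * (x * (lam * W)) ≤ t ^ 2 := by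
    have hup : x * ((n:ℝ) * Real.log x) ≤ x * ((n:ℝ) * (x - 1)) := by
      apply mul_le_mul_of_nonneg_left _ hx0.le
      exact mul_le_mul_of_nonneg_left hlog_le hn0.le
    have : x * (lam * W) ≤ t + x * ((n:ℝ) * (x-1)) := by rw [hid]; linarith
    have h7 := mul_le_mul_of_nonneg_left this hn0.le
    have e : (n:ℝ) * (t + x * ((n:ℝ) * (x - 1))) = t ^ 2 := by rw [htdef]; ring
    linarith [h7, e]
  have hW_nonneg : 0 ≤ W :=
    le_of_mul_le_mul_left (by rw [mul_zero]; linarith [hW1]) hxlam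
  have hWabs : |1 - x ^ n - (n:ℝ) * c| = W := by
    rw [← hWdef]; exact abs_of_nonneg hW_nonneg
  rw [abs_of_nonneg hW_nonneg, le_div_iff₀ hn0]
  have ht2 : t ^ 2 ≤ lam ^ 2 := pow_le_pow_left₀ ht_pos.le htle 2
  have hp : 0 ≤ (W * n) * (lam * x - 1) :=
    mul_nonneg (mul_nonneg hW_nonneg hn0.le) (by linarith)
  linarith [hW2, ht2, hp]

/-- exponential access, strategic welfare vanishes: with `λ > 1` fixed, if for
each `n ≥ 2` the equilibrium effort `c n > 0` satisfies the first-order condition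
`n(1 − e^{−λ cₙ}) = λ e^{−λ cₙ}(1 − e^{−nλ cₙ})`, then `e^{−λ cₙ} = 1 − Θ(1/n)`
(i.e. `n(1 − e^{−λ cₙ})` stays in a fixed positive bounded interval), and the social welfare
`W(cₙ) = 1 − e^{−nλ cₙ} − n cₙ` is `O(1/n)` as `n → ∞`. -/
theorem stmt_9 (lam : ℝ) (hlam : 1 < lam) (c : ℕ → ℝ)
    (hpos : ∀ n : ℕ, 2 ≤ n → 0 < c n)
    (heq : ∀ n : ℕ, 2 ≤ n →
      n * (1 - Real.exp (-(lam * c n)))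
        = lam * Real.exp (-(lam * c n)) * (1 - Real.exp (-(n * lam * c n)))) :
    (∃ aL aH : ℝ, 0 < aL ∧ aL ≤ aH ∧ ∀ n : ℕ, 2 ≤ n →
        Real.exp (-(lam * c n)) ∈ Set.Icc (1 - aH / n) (1 - aL / n)) ∧
    (∃ C : ℝ, ∀ n : ℕ, 2 ≤ n →
        |1 - Real.exp (-(n * lam * c n)) - n * c n| ≤ C / n) := by
  have hlam0 : (0:ℝ) < lam := by linarith
  constructor
  · refine ⟨(lam - 1)/lam, lam, div_pos (by linarith) hlam0, ?_, ?_⟩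
    · rw [div_le_iff₀ hlam0]; nlinarith
    · intro n hn
      obtain ⟨⟨hge, hle⟩, -⟩ := key lam hlam n hn (c n) (hpos n hn) (heq n hn)
      have hn0 : (0:ℝ) < n := by positivity
      constructor
      · have h : 1 - Real.exp (-(lam * c n)) ≤ lam / n := by
          rw [le_div_iff₀ hn0]; linarith [hle]
        linarith
      · have h : (lam - 1)/lam / n ≤ 1 - Real.exp (-(lam * c n)) := by
          rw [div_le_iff₀ hn0]
          linarith [hge]
        linarith
  · refine ⟨lam ^ 2, fun n hn => ?_⟩
    obtain ⟨-, h⟩ := key lam hlam n hn (c n) (hpos n hn) (heq n hn)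
    exact h
end
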